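/- arXiv:1409.5204 — 3 statements merged into one kernel-verified Lean document; each statement's English description precedes it below -/
import Mathlib

section
/- Let j : 𝕋³ → 𝕋³ × ℝ³ be j(θ₁, θ₂, θ₃) = (θ₁, θ₂, θ₃; cos 2πθ₃, sin 2πθ₃, 0), and let ω = Σ dθ_i ∧ dr_i be the canonical symplectic form. Then for every θ ∈ 𝕋³, the kernel of the restriction of ω to the tangent space T_{j(θ)}(j(𝕋³)) is the one-dimensional line spanned by the vector (cos 2πθ₃, sin 2πθ₃, 0; 0, 0, 0). In particular, j(𝕋³) is nowhere Lagrangian. -/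
open Real

/-- The canonical symplectic form ω = Σ dθᵢ ∧ drᵢ on 𝕋³ × ℝ³ (as a bilinear form on
the tangent space (Fin 3 → ℝ) × (Fin 3 → ℝ)). -/
def omega6 (v w : (Fin 3 → ℝ) × (Fin 3 → ℝ)) : ℝ :=
  ∑ i : Fin 3, (v.1 i * w.2 i - w.1 i * v.2 i)

/-- The tangent space T_{j(θ)}(j(𝕋³)) of the embedded torus
j(θ) = (θ; cos 2πθ₃, sin 2πθ₃, 0), spanned by e₁, e₂ and
e₃ = (0,0,1; −2π sin 2πθ₃, 2π cos 2πθ₃, 0). -/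
noncomputable def tangentSpace6 (θ₃ : ℝ) : Submodule ℝ ((Fin 3 → ℝ) × (Fin 3 → ℝ)) :=
  Submodule.span ℝ
    {(![1, 0, 0], (0 : Fin 3 → ℝ)),
     (![0, 1, 0], (0 : Fin 3 → ℝ)),
     (![0, 0, 1], ![-(2 * π) * Real.sin (2 * π * θ₃), 2 * π * Real.cos (2 * π * θ₃), 0])}

/-- The characteristic direction (cos 2πθ₃, sin 2πθ₃, 0; 0, 0, 0). -/
noncomputable def charVector6 (θ₃ : ℝ) : (Fin 3 → ℝ) × (Fin 3 → ℝ) :=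
  (![Real.cos (2 * π * θ₃), Real.sin (2 * π * θ₃), 0], (0 : Fin 3 → ℝ))

noncomputable def ee1 : (Fin 3 → ℝ) × (Fin 3 → ℝ) := (![1, 0, 0], 0)
noncomputable def ee2 : (Fin 3 → ℝ) × (Fin 3 → ℝ) := (![0, 1, 0], 0)
noncomputable def ee3 (θ₃ : ℝ) : (Fin 3 → ℝ) × (Fin 3 → ℝ) :=
  (![0, 0, 1], ![-(2 * π) * Real.sin (2 * π * θ₃), 2 * π * Real.cos (2 * π * θ₃), 0])

lemma mem_tangent (θ₃ : ℝ) (v : (Fin 3 → ℝ) × (Fin 3 → ℝ)) :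
    v ∈ tangentSpace6 θ₃ ↔ ∃ a b c : ℝ, v = a • ee1 + b • ee2 + c • ee3 θ₃ := by
  show v ∈ Submodule.span ℝ {ee1, ee2, ee3 θ₃} ↔ _
  rw [Submodule.mem_span_insert]
  constructor
  · rintro ⟨a, z, hz, rfl⟩
    rw [Submodule.mem_span_insert] at hz
    obtain ⟨b, w, hw, rfl⟩ := hz
    rw [Submodule.mem_span_singleton] at hw
    obtain ⟨c, rfl⟩ := hw
    exact ⟨a, b, c, by abel⟩
  · rintro ⟨a, b, c, rfl⟩
    exact ⟨a, b • ee2 + c • ee3 θ₃, by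
      rw [Submodule.mem_span_insert]
      exact ⟨b, c • ee3 θ₃, Submodule.mem_span_singleton.mpr ⟨c, rfl⟩, rfl⟩, by abel⟩

/-- The kernel of the restriction of ω to the tangent space of the embedded torus is
the line spanned by the characteristic vector; in particular the tangent space is
nowhere Lagrangian (ω does not vanish identically on it). -/
theorem stmt_6 (θ₃ : ℝ) :
    {v | v ∈ tangentSpace6 θ₃ ∧ ∀ w ∈ tangentSpace6 θ₃, omega6 v w = 0} =
      (Submodule.span ℝ {charVector6 θ₃} : Set ((Fin 3 → ℝ) × (Fin 3 → ℝ))) ∧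
    ¬ (∀ v ∈ tangentSpace6 θ₃, ∀ w ∈ tangentSpace6 θ₃, omega6 v w = 0) := by
  set s := Real.sin (2 * π * θ₃) with hs
  set co := Real.cos (2 * π * θ₃) with hco
  have hpyth : s ^ 2 + co ^ 2 = 1 := Real.sin_sq_add_cos_sq _
  have he1 : ee1 ∈ tangentSpace6 θ₃ := (mem_tangent θ₃ _).mpr ⟨1, 0, 0, by simp⟩
  have he2 : ee2 ∈ tangentSpace6 θ₃ := (mem_tangent θ₃ _).mpr ⟨0, 1, 0, by simp⟩
  have he3 : ee3 θ₃ ∈ tangentSpace6 θ₃ := (mem_tangent θ₃ _).mpr ⟨0, 0, 1, by simp⟩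
  have homega : ∀ a b c a' b' c' : ℝ,
      omega6 (a • ee1 + b • ee2 + c • ee3 θ₃) (a' • ee1 + b' • ee2 + c' • ee3 θ₃)
        = 2 * π * (c' * (-(a * s) + b * co) - c * (-(a' * s) + b' * co)) := by
    intro a b c a' b' c'
    simp [omega6, Fin.sum_univ_three, ee1, ee2, ee3]
    ring
  constructor
  · ext v
    simp only [Set.mem_setOf_eq, SetLike.mem_coe, Submodule.mem_span_singleton]
    constructor
    · rintro ⟨hv, hker⟩
      obtain ⟨a, b, c, rfl⟩ := (mem_tangent θ₃ v).mp hv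
      have h1 := hker ((1:ℝ) • ee1 + (0:ℝ) • ee2 + (0:ℝ) • ee3 θ₃)
        ((mem_tangent θ₃ _).mpr ⟨_, _, _, rfl⟩)
      have h2 := hker ((0:ℝ) • ee1 + (1:ℝ) • ee2 + (0:ℝ) • ee3 θ₃)
        ((mem_tangent θ₃ _).mpr ⟨_, _, _, rfl⟩)
      have h3 := hker ((0:ℝ) • ee1 + (0:ℝ) • ee2 + (1:ℝ) • ee3 θ₃)
        ((mem_tangent θ₃ _).mpr ⟨_, _, _, rfl⟩)
      rw [homega] at h1 h2 h3
      have hπ : (2 * π : ℝ) ≠ 0 := by positivity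
      have h1' : c * s = 0 := by
        rcases mul_eq_zero.mp h1 with h | h
        · exact absurd h hπ
        · linear_combination h
      have h2' : c * co = 0 := by
        rcases mul_eq_zero.mp h2 with h | h
        · exact absurd h hπ
        · linear_combination -h
      have hc : c = 0 := by linear_combination s * h1' + co * h2' - c * hpyth
      have h3' : -(a * s) + b * co = 0 := by
        rcases mul_eq_zero.mp h3 with h | h
        · exact absurd h hπ
        · linear_combination h
      refine ⟨a * co + b * s, ?_⟩
      subst hc
      have ha : (a * co + b * s) * co = a := by linear_combination s * h3' + a * hpyth
      have hb : (a * co + b * s) * s = b := by linear_combination (-co) * h3' + b * hpyth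
      apply Prod.ext
      · show (a * co + b * s) • ![co, s, 0] = _
        funext i
        fin_cases i <;>
          (simp [ee1, ee2, ee3, Pi.smul_apply, smul_eq_mul, ← hco, ← hs] <;>
            try linarith [ha, hb])
      · show (a * co + b * s) • (0 : Fin 3 → ℝ) = _
        simp [ee1, ee2, ee3]
    · rintro ⟨r, rfl⟩
      have hchar : r • charVector6 θ₃ = (r * co) • ee1 + (r * s) • ee2 + (0:ℝ) • ee3 θ₃ := by
        apply Prod.ext
        · funext i
          fin_cases i <;> (simp [charVector6, ee1, ee2, ee3, ← hco, ← hs] <;> try ring)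
        · simp [charVector6, ee1, ee2, ee3]
      constructor
      · rw [hchar]; exact (mem_tangent θ₃ _).mpr ⟨_, _, _, rfl⟩
      · intro w hw
        obtain ⟨a', b', c', rfl⟩ := (mem_tangent θ₃ w).mp hw
        rw [hchar, homega]
        ring
  · intro h
    have h1 := h ((1:ℝ) • ee1 + (0:ℝ) • ee2 + (0:ℝ) • ee3 θ₃)
      ((mem_tangent θ₃ _).mpr ⟨_, _, _, rfl⟩)
      ((0:ℝ) • ee1 + (0:ℝ) • ee2 + (1:ℝ) • ee3 θ₃)
      ((mem_tangent θ₃ _).mpr ⟨_, _, _, rfl⟩)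
    have h2 := h ((0:ℝ) • ee1 + (1:ℝ) • ee2 + (0:ℝ) • ee3 θ₃)
      ((mem_tangent θ₃ _).mpr ⟨_, _, _, rfl⟩)
      ((0:ℝ) • ee1 + (0:ℝ) • ee2 + (1:ℝ) • ee3 θ₃)
      ((mem_tangent θ₃ _).mpr ⟨_, _, _, rfl⟩)
    rw [homega] at h1 h2
    have hπ : (2 * π : ℝ) ≠ 0 := by positivity
    have hs0 : s = 0 := by
      rcases mul_eq_zero.mp h1 with hh | hh
      · exact absurd hh hπ
      · linear_combination -hh
    have hco0 : co = 0 := by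
      rcases mul_eq_zero.mp h2 with hh | hh
      · exact absurd hh hπ
      · linear_combination hh
    rw [hs0, hco0] at hpyth
    norm_num at hpyth
end

section
/- Let A ∈ SL(2, ℤ) and v ∈ ℤ², v ≠ 0. If the sequence (A^n v)_{n∈ℕ} is unbounded, then ‖A^n v‖ → ∞ as n → ∞. -/
/-!
An integer vector of bounded norm can take only finitely many values, so an orbit of `A` that
does not escape to infinity repeats a value. Being an orbit of a map, it is then eventually
periodic and in particular bounded.
-/

open Filter Function Set Bornology

namespace Function

theorem finite_range_iterate_of_iterate_eq {α : Type*} {T : α → α} {x : α} {a b : ℕ}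
    (hab : a < b) (h : T^[a] x = T^[b] x) : (range fun n => T^[n] x).Finite := by
  have hper : IsPeriodicPt T (b - a) (T^[a] x) := by
    rw [IsPeriodicPt, IsFixedPt, ← iterate_add_apply, Nat.sub_add_cancel hab.le, h]
  refine ((finite_Iio b).image fun n => T^[n] x).subset ?_
  rintro _ ⟨n, rfl⟩
  rcases lt_or_ge n a with hna | han
  · exact ⟨n, hna.trans hab, rfl⟩
  · refine ⟨(n - a) % (b - a) + a, ?_, ?_⟩
    · have := Nat.mod_lt (n - a) (Nat.sub_pos_of_lt hab)
      exact mem_Iio.mpr (by omega)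
    · show T^[(n - a) % (b - a) + a] x = T^[n] x
      rw [iterate_add_apply, hper.iterate_mod_apply, ← iterate_add_apply, Nat.sub_add_cancel han]

theorem injective_iterate_of_infinite_range {α : Type*} {T : α → α} {x : α}
    (h : (range fun n => T^[n] x).Infinite) : Injective fun n => T^[n] x := by
  intro a b hab
  by_contra hne
  rcases lt_or_gt_of_ne hne with hlt | hlt
  · exact h (finite_range_iterate_of_iterate_eq hlt hab)
  · exact h (finite_range_iterate_of_iterate_eq hlt hab.symm)

end Function

theorem tendsto_iterate_cobounded_of_not_isBounded {X : Type*} [PseudoMetricSpace X]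
    [ProperSpace X] [DiscreteTopology X] {T : X → X} {x : X}
    (h : ¬ IsBounded (range fun n => T^[n] x)) :
    Tendsto (fun n => T^[n] x) atTop (cobounded X) := by
  rw [Metric.cobounded_eq_cocompact, cocompact_eq_cofinite, ← Nat.cofinite_eq_atTop]
  exact (injective_iterate_of_infinite_range fun hfin => h hfin.isBounded).tendsto_cofinite

theorem Matrix.pow_mulVec_eq_iterate {n R : Type*} [Fintype n] [DecidableEq n] [Semiring R]
    (A : Matrix n n R) (v : n → R) (k : ℕ) : (A ^ k).mulVec v = A.mulVec^[k] v := by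
  induction k with
  | zero => simp
  | succ k ih => rw [pow_succ', ← Matrix.mulVec_mulVec, ih, iterate_succ_apply']

theorem stmt_9_general (A : Matrix (Fin 2) (Fin 2) ℤ)
    (v : Fin 2 → ℤ)
    (hub : ¬ ∃ C : ℝ, ∀ n : ℕ, ‖(A ^ n).mulVec v‖ ≤ C) :
    Filter.Tendsto (fun n : ℕ => ‖(A ^ n).mulVec v‖) Filter.atTop Filter.atTop := by
  simp only [Matrix.pow_mulVec_eq_iterate] at hub ⊢
  refine tendsto_norm_atTop_iff_cobounded.mpr (tendsto_iterate_cobounded_of_not_isBounded ?_)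
  rw [isBounded_iff_forall_norm_le]
  rintro ⟨C, hC⟩
  exact hub ⟨C, fun n => hC _ ⟨n, rfl⟩⟩

/-- Let A ∈ SL(2, ℤ) and v ∈ ℤ², v ≠ 0.  If the sequence (Aⁿ v) is unbounded, then
‖Aⁿ v‖ → ∞ as n → ∞. -/
theorem stmt_9 (A : Matrix (Fin 2) (Fin 2) ℤ) (hA : A.det = 1)
    (v : Fin 2 → ℤ) (hv : v ≠ 0)
    (hub : ¬ ∃ C : ℝ, ∀ n : ℕ, ‖(A ^ n).mulVec v‖ ≤ C) :
    Filter.Tendsto (fun n : ℕ => ‖(A ^ n).mulVec v‖) Filter.atTop Filter.atTop :=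
  stmt_9_general A v hub
end

section
/- Let f : ℝ^d → ℝ^d be a bounded Lipschitz map, η : ℝ^d → ℝ a continuous nonnegative function supported in the unit ball with ∫η = 1, and define A : ℝ^d × ℝ^d → ℝ by A(q, 0) = 0 and, for p ≠ 0, A(q, p) = ∫_{ℝ^d} η(v) (f(q − ‖p‖v) · p) dv. Then A is C¹ at every point (q, 0), with ∂A/∂q(q, 0) = 0 and ∂A/∂p(q, 0) = f(q). -/
/-!
Write `φᵥ x = x.1 - ‖x.2‖ • v`. Splitting
`A x - A y - ⟪f q, x.2 - y.2⟫ = ∫ η v (⟪f (φᵥ x) - f q, x.2 - y.2⟫ + ⟪f (φᵥ x) - f (φᵥ y), y.2⟫)`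
and using that `η` lives in the unit ball gives
`|A x - A y - ⟪f q, x.2 - y.2⟫| ≤ K (‖x.1 - q‖ + ‖x.2‖ + 2 ‖y.2‖) ‖x - y‖`.
For `y = (q, 0)` the right-hand side is quadratic in `x - y`, which gives the derivative at
`(q, 0)`; on the ball of radius `δ` about `(q, 0)` it makes `A - ⟪f q, ·.2⟫` `4Kδ`-Lipschitz, so
the derivative of `A`, wherever it exists there, is `4Kδ`-close to the one at `(q, 0)`. Off
`{p = 0}`, `A` is differentiable by differentiation under the integral sign, the integrand being
differentiable for almost every `v` by Rademacher's theorem.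
-/

open MeasureTheory Metric Function Asymptotics
open scoped NNReal RealInnerProductSpace

variable {E : Type*} [NormedAddCommGroup E]

structure IsMollifier [MeasurableSpace E] (μ : Measure E) (η : E → ℝ) : Prop where
  continuous : Continuous η
  nonneg : ∀ v, 0 ≤ η v
  support_subset : support η ⊆ closedBall 0 1
  integral_eq_one : ∫ v, η v ∂μ = 1

namespace IsMollifier

variable [MeasurableSpace E] {μ : Measure E} {η : E → ℝ}

theorem norm_le_one_of_ne_zero (hη : IsMollifier μ η) {v : E} (hv : η v ≠ 0) : ‖v‖ ≤ 1 := by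
  simpa using hη.support_subset hv

variable [ProperSpace E]

theorem hasCompactSupport (hη : IsMollifier μ η) : HasCompactSupport η :=
  (isCompact_closedBall 0 1).closure_of_subset hη.support_subset

variable [OpensMeasurableSpace E] [IsFiniteMeasureOnCompacts μ]
  {F : Type*} [NormedAddCommGroup F] [NormedSpace ℝ F]

theorem integrable_smul (hη : IsMollifier μ η) {g : E → F} (hg : Continuous g) :
    Integrable (fun v => η v • g v) μ :=
  (hη.continuous.smul hg).integrable_of_hasCompactSupport hη.hasCompactSupport.smul_right

theorem norm_integral_smul_sub_le [CompleteSpace F] (hη : IsMollifier μ η) {g : E → F}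
    (hg : Continuous g) {c : F} {ε : ℝ} (h : ∀ v, ‖v‖ ≤ 1 → ‖g v - c‖ ≤ ε) :
    ‖∫ v, η v • g v ∂μ - c‖ ≤ ε := by
  have hc : ∫ v, η v • c ∂μ = c := by rw [integral_smul_const, hη.integral_eq_one, one_smul]
  have hε : Integrable (fun v => η v * ε) μ := by
    simpa using hη.integrable_smul (continuous_const : Continuous fun _ : E => ε)
  calc ‖∫ v, η v • g v ∂μ - c‖ = ‖∫ v, η v • (g v - c) ∂μ‖ := by
        simp_rw [smul_sub]
        rw [integral_sub (hη.integrable_smul hg) (hη.integrable_smul continuous_const), hc]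
    _ ≤ ∫ v, η v * ε ∂μ := by
        refine norm_integral_le_of_norm_le hε (ae_of_all _ fun v => ?_)
        rw [norm_smul, Real.norm_of_nonneg (hη.nonneg v)]
        rcases eq_or_ne (η v) 0 with hv | hv
        · simp [hv]
        · exact mul_le_mul_of_nonneg_left (h v (hη.norm_le_one_of_ne_zero hv)) (hη.nonneg v)
    _ = ε := by rw [integral_mul_const, hη.integral_eq_one, one_mul]

end IsMollifier

section NormedSpace

variable [NormedSpace ℝ E]

theorem norm_sub_norm_smul_sub_le_two_mul {v : E} (hv : ‖v‖ ≤ 1) (x y : E × E) :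
    ‖(x.1 - ‖x.2‖ • v) - (y.1 - ‖y.2‖ • v)‖ ≤ 2 * ‖x - y‖ := by
  calc ‖(x.1 - ‖x.2‖ • v) - (y.1 - ‖y.2‖ • v)‖ = ‖(x - y).1 - (‖x.2‖ - ‖y.2‖) • v‖ := by
        rw [sub_smul, Prod.fst_sub]; congr 1; abel
    _ ≤ ‖(x - y).1‖ + |‖x.2‖ - ‖y.2‖| * ‖v‖ := by
        rw [← Real.norm_eq_abs, ← norm_smul]; exact norm_sub_le _ _
    _ ≤ ‖x - y‖ + ‖(x - y).2‖ * 1 := by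
        gcongr
        · exact norm_fst_le _
        · exact abs_norm_sub_norm_le _ _
    _ ≤ 2 * ‖x - y‖ := by linarith [norm_snd_le (x - y)]

theorem norm_sub_norm_smul_sub_le_add {v : E} (hv : ‖v‖ ≤ 1) (x : E × E) (q : E) :
    ‖x.1 - ‖x.2‖ • v - q‖ ≤ ‖x.1 - q‖ + ‖x.2‖ := by
  calc ‖x.1 - ‖x.2‖ • v - q‖ = ‖(x.1 - q) - ‖x.2‖ • v‖ := by congr 1; abel
    _ ≤ ‖x.1 - q‖ + ‖x.2‖ * ‖v‖ := by
        refine (norm_sub_le _ _).trans ?_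
        rw [norm_smul, norm_norm]
    _ ≤ ‖x.1 - q‖ + ‖x.2‖ := by nlinarith [norm_nonneg x.2]

theorem LipschitzWith.ae_differentiableAt_sub_smul [FiniteDimensional ℝ E] [MeasurableSpace E]
    [BorelSpace E] (μ : Measure E) [μ.IsAddHaarMeasure] {F : Type*} [NormedAddCommGroup F]
    [NormedSpace ℝ F] [FiniteDimensional ℝ F] {f : E → F} {K : ℝ≥0} (hf : LipschitzWith K f)
    (a : E) {t : ℝ} (ht : t ≠ 0) :
    ∀ᵐ v ∂μ, DifferentiableAt ℝ f (a - t • v) := by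
  have hqmp : Measure.QuasiMeasurePreserving (fun v : E => a + (-t) • v) μ μ :=
    (measurePreserving_add_left μ a).quasiMeasurePreserving.comp
      (Measure.quasiMeasurePreserving_smul μ (neg_ne_zero.2 ht))
  simpa [neg_smul, ← sub_eq_add_neg] using hqmp.ae hf.ae_differentiableAt

end NormedSpace

variable [InnerProductSpace ℝ E]

theorem Continuous.inner_comp_sub_norm_smul {f : E → E} (hf : Continuous f) (x : E × E) :
    Continuous fun v : E => ⟪f (x.1 - ‖x.2‖ • v), x.2⟫ :=
  (hf.comp (continuous_const.sub (continuous_const_smul _))).inner continuous_const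

theorem LipschitzWith.abs_inner_sub_inner_sub_inner_le {f : E → E} {K : ℝ≥0}
    (hf : LipschitzWith K f) {v : E} (hv : ‖v‖ ≤ 1) (x y : E × E) (q : E) :
    |⟪f (x.1 - ‖x.2‖ • v), x.2⟫ - ⟪f (y.1 - ‖y.2‖ • v), y.2⟫ - ⟪f q, x.2 - y.2⟫|
      ≤ K * (‖x.1 - q‖ + ‖x.2‖ + 2 * ‖y.2‖) * ‖x - y‖ := by
  set a := x.1 - ‖x.2‖ • v
  set b := y.1 - ‖y.2‖ • v
  have hxy : ‖x.2 - y.2‖ ≤ ‖x - y‖ := norm_snd_le (x - y)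
  have haq : ‖f a - f q‖ ≤ K * (‖x.1 - q‖ + ‖x.2‖) :=
    (hf.norm_sub_le a q).trans (by gcongr; exact norm_sub_norm_smul_sub_le_add hv x q)
  have hab : ‖f a - f b‖ ≤ K * (2 * ‖x - y‖) :=
    (hf.norm_sub_le a b).trans (by gcongr; exact norm_sub_norm_smul_sub_le_two_mul hv x y)
  calc |⟪f a, x.2⟫ - ⟪f b, y.2⟫ - ⟪f q, x.2 - y.2⟫|
      = |⟪f a - f q, x.2 - y.2⟫ + ⟪f a - f b, y.2⟫| := by
        congr 1
        simp only [inner_sub_left, inner_sub_right]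
        ring
    _ ≤ ‖f a - f q‖ * ‖x.2 - y.2‖ + ‖f a - f b‖ * ‖y.2‖ :=
        (abs_add_le _ _).trans (add_le_add (abs_real_inner_le_norm _ _)
          (abs_real_inner_le_norm _ _))
    _ ≤ K * (‖x.1 - q‖ + ‖x.2‖) * ‖x - y‖ + K * (2 * ‖x - y‖) * ‖y.2‖ := by gcongr
    _ = K * (‖x.1 - q‖ + ‖x.2‖ + 2 * ‖y.2‖) * ‖x - y‖ := by ring

theorem LipschitzWith.abs_inner_sub_inner_le {f : E → E} {K : ℝ≥0} (hf : LipschitzWith K f)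
    {v : E} (hv : ‖v‖ ≤ 1) {x y : E × E} (hxy : ‖x - y‖ ≤ 1) :
    |⟪f (x.1 - ‖x.2‖ • v), x.2⟫ - ⟪f (y.1 - ‖y.2‖ • v), y.2⟫|
      ≤ (‖f y.1‖ + K * (3 * ‖y.2‖ + 2)) * ‖x - y‖ := by
  have hx1 : ‖x.1 - y.1‖ ≤ ‖x - y‖ := norm_fst_le (x - y)
  have hx2 : ‖x.2 - y.2‖ ≤ ‖x - y‖ := norm_snd_le (x - y)
  have hsum : ‖x.1 - y.1‖ + ‖x.2‖ + 2 * ‖y.2‖ ≤ 3 * ‖y.2‖ + 2 := by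
    linarith [norm_le_norm_add_norm_sub' x.2 y.2]
  calc |⟪f (x.1 - ‖x.2‖ • v), x.2⟫ - ⟪f (y.1 - ‖y.2‖ • v), y.2⟫|
      ≤ |⟪f (x.1 - ‖x.2‖ • v), x.2⟫ - ⟪f (y.1 - ‖y.2‖ • v), y.2⟫ - ⟪f y.1, x.2 - y.2⟫|
        + |⟪f y.1, x.2 - y.2⟫| :=
        (abs_add_le _ _).trans_eq' (by rw [sub_add_cancel])
    _ ≤ K * (‖x.1 - y.1‖ + ‖x.2‖ + 2 * ‖y.2‖) * ‖x - y‖ + ‖f y.1‖ * ‖x - y‖ :=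
        add_le_add (hf.abs_inner_sub_inner_sub_inner_le hv x y y.1)
          ((abs_real_inner_le_norm _ _).trans (by gcongr))
    _ ≤ K * (3 * ‖y.2‖ + 2) * ‖x - y‖ + ‖f y.1‖ * ‖x - y‖ := by gcongr
    _ = (‖f y.1‖ + K * (3 * ‖y.2‖ + 2)) * ‖x - y‖ := by ring

noncomputable def mollifiedPairing [MeasurableSpace E] (μ : Measure E) (η : E → ℝ) (f : E → E)
    (x : E × E) : ℝ :=
  ∫ v, η v * ⟪f (x.1 - ‖x.2‖ • v), x.2⟫ ∂μ

namespace IsMollifier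

section FiniteMeasureOnCompacts

variable [MeasurableSpace E] [ProperSpace E] [OpensMeasurableSpace E] {μ : Measure E}
  [IsFiniteMeasureOnCompacts μ] {η : E → ℝ} {f : E → E} {K : ℝ≥0}

theorem abs_mollifiedPairing_sub_sub_le (hη : IsMollifier μ η) (hf : LipschitzWith K f)
    (x y : E × E) (q : E) :
    |mollifiedPairing μ η f x - mollifiedPairing μ η f y - ⟪f q, x.2 - y.2⟫|
      ≤ K * (‖x.1 - q‖ + ‖x.2‖ + 2 * ‖y.2‖) * ‖x - y‖ := by
  have hg := hf.continuous.inner_comp_sub_norm_smul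
  have hdiff : mollifiedPairing μ η f x - mollifiedPairing μ η f y =
      ∫ v, η v • (⟪f (x.1 - ‖x.2‖ • v), x.2⟫ - ⟪f (y.1 - ‖y.2‖ • v), y.2⟫) ∂μ := by
    simp_rw [smul_sub]
    exact (integral_sub (hη.integrable_smul (hg x)) (hη.integrable_smul (hg y))).symm
  rw [hdiff, ← Real.norm_eq_abs]
  exact hη.norm_integral_smul_sub_le ((hg x).sub (hg y)) fun v hv =>
    hf.abs_inner_sub_inner_sub_inner_le hv x y q

theorem hasFDerivAt_mollifiedPairing_zero (hη : IsMollifier μ η) (hf : LipschitzWith K f)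
    (q : E) :
    HasFDerivAt (mollifiedPairing μ η f)
      ((innerSL ℝ (f q)).comp (ContinuousLinearMap.snd ℝ E E)) (q, 0) := by
  rw [hasFDerivAt_iff_isLittleO_nhds_zero]
  refine IsBigO.trans_isLittleO ?_ (isLittleO_norm_pow_id one_lt_two)
  refine IsBigO.of_bound (2 * K) (Filter.Eventually.of_forall fun z => ?_)
  have h := hη.abs_mollifiedPairing_sub_sub_le hf ((q, 0) + z) (q, 0) q
  simp only [Prod.fst_add, Prod.snd_add, zero_add, add_sub_cancel_left, sub_zero,
    norm_zero, mul_zero, add_zero] at h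
  rw [Real.norm_eq_abs, norm_pow, norm_norm]
  calc _ = |mollifiedPairing μ η f ((q, 0) + z) - mollifiedPairing μ η f (q, 0) - ⟪f q, z.2⟫| :=
        rfl
    _ ≤ K * (‖z.1‖ + ‖z.2‖) * ‖z‖ := h
    _ ≤ K * (‖z‖ + ‖z‖) * ‖z‖ := by gcongr; exacts [norm_fst_le z, norm_snd_le z]
    _ = 2 * K * ‖z‖ ^ 2 := by ring

theorem norm_fderiv_mollifiedPairing_sub_le (hη : IsMollifier μ η) (hf : LipschitzWith K f)
    {q : E} {δ : ℝ} {x : E × E} (hx : x ∈ ball (q, 0) δ)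
    (hdiff : DifferentiableAt ℝ (mollifiedPairing μ η f) x) :
    ‖fderiv ℝ (mollifiedPairing μ η f) x - (innerSL ℝ (f q)).comp (ContinuousLinearMap.snd ℝ E E)‖
      ≤ 4 * K * δ := by
  set L := (innerSL ℝ (f q)).comp (ContinuousLinearMap.snd ℝ E E)
  have hδ : 0 ≤ δ := (dist_nonneg.trans_lt hx).le
  rw [← L.fderiv (x := x), ← fderiv_sub hdiff L.differentiableAt]
  refine norm_fderiv_le_of_lip' ℝ (by positivity) ?_
  filter_upwards [isOpen_ball.mem_nhds hx] with y hy
  have hball : ∀ z ∈ ball (q, (0 : E)) δ, ‖z.1 - q‖ < δ ∧ ‖z.2‖ < δ := fun z hz => by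
    rw [mem_ball, dist_eq_norm] at hz
    exact ⟨(norm_fst_le _).trans_lt hz, by simpa using (norm_snd_le _).trans_lt hz⟩
  obtain ⟨hy1, hy2⟩ := hball y hy
  have hx2 := (hball x hx).2
  calc ‖mollifiedPairing μ η f y - L y - (mollifiedPairing μ η f x - L x)‖
      = |mollifiedPairing μ η f y - mollifiedPairing μ η f x - ⟪f q, y.2 - x.2⟫| := by
        rw [Real.norm_eq_abs]
        congr 1
        simp only [L, ContinuousLinearMap.coe_comp, comp_apply, ContinuousLinearMap.coe_snd',
          innerSL_apply_apply, inner_sub_right]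
        ring
    _ ≤ K * (‖y.1 - q‖ + ‖y.2‖ + 2 * ‖x.2‖) * ‖y - x‖ :=
        hη.abs_mollifiedPairing_sub_sub_le hf y x q
    _ ≤ K * (4 * δ) * ‖y - x‖ := by gcongr; linarith
    _ = 4 * K * δ * ‖y - x‖ := by ring

end FiniteMeasureOnCompacts

section AddHaar

variable [FiniteDimensional ℝ E] [MeasurableSpace E] [BorelSpace E] {μ : Measure E}
  [μ.IsAddHaarMeasure] {η : E → ℝ} {f : E → E} {K : ℝ≥0}

theorem differentiableAt_mollifiedPairing (hη : IsMollifier μ η) (hf : LipschitzWith K f)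
    (q : E) {p : E} (hp : p ≠ 0) :
    DifferentiableAt ℝ (mollifiedPairing μ η f) (q, p) := by
  set F : E × E → E → ℝ := fun x v => η v * ⟪f (x.1 - ‖x.2‖ • v), x.2⟫
  have hg := hf.continuous.inner_comp_sub_norm_smul
  have hFc : Continuous (uncurry fun v x => F x v) :=
    (hη.continuous.comp continuous_fst).mul ((hf.continuous.comp
      (continuous_snd.fst.sub (continuous_snd.snd.norm.smul continuous_fst))).inner
        continuous_snd.snd)
  -- Taking the pointwise `fderiv` as the candidate derivative, its measurability in `v`
  -- follows from the joint continuity of the integrand.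
  have hF'_meas : AEStronglyMeasurable (fun v => fderiv ℝ (F · v) (q, p)) μ :=
    ((measurable_fderiv_with_param ℝ hFc).comp
      (measurable_id.prodMk measurable_const)).aestronglyMeasurable
  have h_diff : ∀ᵐ v ∂μ, HasFDerivAt (F · v) (fderiv ℝ (F · v) (q, p)) (q, p) := by
    filter_upwards [hf.ae_differentiableAt_sub_smul μ q (norm_ne_zero_iff.2 hp)] with v hv
    refine DifferentiableAt.hasFDerivAt ?_
    exact ((hv.comp (q, p) (differentiableAt_fst.sub
      ((differentiableAt_snd.norm ℝ hp).smul_const v))).inner ℝ differentiableAt_snd).const_mul _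
  have h_lip : ∀ᵐ v ∂μ, ∀ x ∈ ball (q, p) 1,
      ‖F x v - F (q, p) v‖ ≤ η v * (‖f q‖ + K * (3 * ‖p‖ + 2)) * ‖x - (q, p)‖ := by
    refine ae_of_all _ fun v x hx => ?_
    rcases eq_or_ne (η v) 0 with hv | hv
    · simp [F, hv]
    rw [mem_ball, dist_eq_norm] at hx
    calc ‖F x v - F (q, p) v‖
        = η v * |⟪f (x.1 - ‖x.2‖ • v), x.2⟫ - ⟪f (q - ‖p‖ • v), p⟫| := by
          rw [← mul_sub, norm_mul, Real.norm_of_nonneg (hη.nonneg v), Real.norm_eq_abs]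
      _ ≤ η v * ((‖f q‖ + K * (3 * ‖p‖ + 2)) * ‖x - (q, p)‖) := by
          gcongr
          exacts [hη.nonneg v,
            hf.abs_inner_sub_inner_le (hη.norm_le_one_of_ne_zero hv) (x := x) (y := (q, p)) hx.le]
      _ = η v * (‖f q‖ + K * (3 * ‖p‖ + 2)) * ‖x - (q, p)‖ := by ring
  have h_bound : Integrable (fun v => η v * (‖f q‖ + K * (3 * ‖p‖ + 2))) μ := by
    simpa using hη.integrable_smul
      (continuous_const : Continuous fun _ : E => ‖f q‖ + K * (3 * ‖p‖ + 2))
  exact (hasFDerivAt_integral_of_dominated_loc_of_lip' (ball_mem_nhds _ one_pos)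
    (fun x _ => (hη.integrable_smul (hg x)).aestronglyMeasurable)
    (hη.integrable_smul (hg (q, p))) hF'_meas h_lip h_bound h_diff).2.differentiableAt

theorem differentiable_mollifiedPairing (hη : IsMollifier μ η) (hf : LipschitzWith K f) :
    Differentiable ℝ (mollifiedPairing μ η f) := by
  rintro ⟨q, p⟩
  rcases eq_or_ne p 0 with rfl | hp
  · exact (hη.hasFDerivAt_mollifiedPairing_zero hf q).differentiableAt
  · exact hη.differentiableAt_mollifiedPairing hf q hp

theorem continuousAt_fderiv_mollifiedPairing_zero (hη : IsMollifier μ η)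
    (hf : LipschitzWith K f) (q : E) :
    ContinuousAt (fderiv ℝ (mollifiedPairing μ η f)) (q, 0) := by
  rw [ContinuousAt, (hη.hasFDerivAt_mollifiedPairing_zero hf q).fderiv]
  refine (Metric.tendsto_nhds (u := fderiv ℝ (mollifiedPairing μ η f))).2 fun ε hε => ?_
  have hδ : 0 < ε / (4 * K + 1) := by positivity
  filter_upwards [ball_mem_nhds _ hδ] with x hx
  refine (dist_eq_norm (fderiv ℝ (mollifiedPairing μ η f) x) _).trans_lt ?_
  calc _ ≤ 4 * K * (ε / (4 * K + 1)) :=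
        hη.norm_fderiv_mollifiedPairing_sub_le hf hx (hη.differentiable_mollifiedPairing hf x)
    _ < ε := by
        rw [mul_div_assoc', div_lt_iff₀ (by positivity)]
        linarith

end AddHaar

end IsMollifier

theorem stmt_17_general {d : ℕ}
    (f : EuclideanSpace ℝ (Fin d) → EuclideanSpace ℝ (Fin d))
    (K : NNReal) (hlip : LipschitzWith K f)
    (η : EuclideanSpace ℝ (Fin d) → ℝ)
    (hηc : Continuous η) (hη0 : ∀ v, 0 ≤ η v)
    (hηsupp : Function.support η ⊆ Metric.closedBall 0 1)
    (hη1 : ∫ v, η v = 1)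
    (A : EuclideanSpace ℝ (Fin d) × EuclideanSpace ℝ (Fin d) → ℝ)
    (hA0 : ∀ q, A (q, 0) = 0)
    (hA : ∀ q p, p ≠ 0 → A (q, p) = ∫ v, η v * ⟪f (q - ‖p‖ • v), p⟫) :
    ∀ q : EuclideanSpace ℝ (Fin d),
      HasFDerivAt A
        ((innerSL ℝ (f q)).comp
          (ContinuousLinearMap.snd ℝ (EuclideanSpace ℝ (Fin d)) (EuclideanSpace ℝ (Fin d))))
        (q, 0) ∧
      ContinuousAt (fderiv ℝ A) (q, 0) := by
  have hη : IsMollifier volume η := ⟨hηc, hη0, hηsupp, hη1⟩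
  have hA_eq : A = mollifiedPairing volume η f := by
    funext ⟨q, p⟩
    rcases eq_or_ne p 0 with rfl | hp
    · simp [hA0, mollifiedPairing]
    · exact hA q p hp
  subst hA_eq
  exact fun q => ⟨hη.hasFDerivAt_mollifiedPairing_zero hlip q,
    hη.continuousAt_fderiv_mollifiedPairing_zero hlip q⟩

/-- Let f : ℝ^d → ℝ^d be a bounded Lipschitz map, η a continuous nonnegative mollifier
supported in the unit ball with ∫ η = 1, and A(q, 0) = 0,
A(q, p) = ∫ η(v) (f(q − ‖p‖v) · p) dv for p ≠ 0.  Then A is C¹ at every point (q, 0),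
with ∂A/∂q(q, 0) = 0 and ∂A/∂p(q, 0) = f(q). -/
theorem stmt_17 {d : ℕ}
    (f : EuclideanSpace ℝ (Fin d) → EuclideanSpace ℝ (Fin d))
    (C : ℝ) (hbd : ∀ x, ‖f x‖ ≤ C) (K : NNReal) (hlip : LipschitzWith K f)
    (η : EuclideanSpace ℝ (Fin d) → ℝ)
    (hηc : Continuous η) (hη0 : ∀ v, 0 ≤ η v)
    (hηsupp : Function.support η ⊆ Metric.closedBall 0 1)
    (hη1 : ∫ v, η v = 1)
    (A : EuclideanSpace ℝ (Fin d) × EuclideanSpace ℝ (Fin d) → ℝ)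
    (hA0 : ∀ q, A (q, 0) = 0)
    (hA : ∀ q p, p ≠ 0 → A (q, p) = ∫ v, η v * ⟪f (q - ‖p‖ • v), p⟫) :
    ∀ q : EuclideanSpace ℝ (Fin d),
      HasFDerivAt A
        ((innerSL ℝ (f q)).comp
          (ContinuousLinearMap.snd ℝ (EuclideanSpace ℝ (Fin d)) (EuclideanSpace ℝ (Fin d))))
        (q, 0) ∧
      ContinuousAt (fderiv ℝ A) (q, 0) :=
  stmt_17_general f K hlip η hηc hη0 hηsupp hη1 A hA0 hA
end
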